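/- arXiv:2206.06136 — 5 statements merged into one kernel-verified Lean document; each statement's English description precedes it below -/
import Mathlib

section
/- The only equivalence relations on ZMod 12 compatible with the loop operation of L are the four coset relations of the subgroups {0}, {0,4,8}, 2·ZMod 12 = {0,2,4,6,8,10}, and ZMod 12. Precisely: if r is an equivalence relation on ZMod 12 such that r a b and r c d imply r (a * c) (b * d), then r is one of: equality; the relation x ~ y iff x − y ∈ {0,4,8}; the relation x ~ y iff x − y is even; or the total relation. In particular L is subdirectly irreducible. -/
/-- The natural projection `ZMod 12 → ZMod 4`. -/
def pi4 : ZMod 12 →+* ZMod 4 := ZMod.castHom (show (4:ℕ) ∣ 12 by norm_num) (ZMod 4)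

/-- The cocycle `t` of Vaughan–Lee's loop. -/
def t (x y : ZMod 12) : ZMod 12 :=
  if (pi4 x = 1 ∧ pi4 y = 3) ∨ (pi4 x = 3 ∧ pi4 y = 1) then 4 else 0

/-- The multiplication of Vaughan–Lee's loop `L`. -/
def mulL (x y : ZMod 12) : ZMod 12 := x + y + t x y

instance : DecidablePred (Even : ZMod 12 → Prop) :=
  fun x => decidable_of_iff (∃ r : ZMod 12, x = r + r) Iff.rfl

section Aux

variable (r : ZMod 12 → ZMod 12 → Prop) (hr : Equivalence r)
  (hcomp : ∀ a b c d : ZMod 12, r a b → r c d → r (mulL a c) (mulL b d))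

include hr hcomp

/-- Translation by an element whose image mod 4 is even. -/
lemma shiftE (x y c : ZMod 12) (hc : pi4 c = 0 ∨ pi4 c = 2) (h : r x y) :
    r (x + c) (y + c) := by
  have ht : ∀ z : ZMod 12, t z c = 0 := by
    intro z
    unfold t
    rw [if_neg]
    rintro (⟨_, h'⟩ | ⟨_, h'⟩) <;> rcases hc with hc | hc <;>
      exact absurd (hc.symm.trans h') (by decide)
  have h2 := hcomp x y c c h (hr.refl c)
  simp only [mulL, ht, add_zero] at h2
  exact h2

/-- If one related pair has difference in {2,6,10}, then all pairs with even
difference are related. -/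
lemma LB2 (a b : ZMod 12) (hab : r a b) (hev : Even (a - b)) (hne : pi4 a ≠ pi4 b) :
    ∀ x y : ZMod 12, Even (x - y) → r x y := by
  have hδ : b - a = 2 ∨ b - a = 6 ∨ b - a = 10 :=
    (show ∀ a b : ZMod 12, Even (a - b) → pi4 a ≠ pi4 b →
        (b - a = 2 ∨ b - a = 6 ∨ b - a = 10) from by decide) a b hev hne
  have key : ∀ u : ZMod 12, pi4 u = pi4 a → r u (u + (b - a)) := by
    intro u hu
    have h := shiftE r hr hcomp a b (u - a) (Or.inl (by rw [map_sub, hu, sub_self])) hab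
    rwa [show a + (u - a) = u from by ring, show b + (u - a) = u + (b - a) from by ring] at h
  have hv4 : pi4 a = 0 ∨ pi4 a = 1 ∨ pi4 a = 2 ∨ pi4 a = 3 := by
    rcases (show ∀ v : ZMod 4, v = 0 ∨ v = 1 ∨ v = 2 ∨ v = 3 from by decide) (pi4 a) with h|h|h|h <;> tauto
  have base : r 0 2 ∧ r 1 3 ∧ r 2 4 ∧ r 3 5 := by
    rcases hv4 with hv|hv|hv|hv <;> rcases hδ with hd|hd|hd
    · -- pi4 a = 0, b - a = 2
      have h0 : r (0:ZMod 12) (2:ZMod 12) := by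
        have h := key 0 (by rw [hv]; decide)
        rw [hd] at h
        rwa [show (0:ZMod 12) + 2 = 2 from by decide] at h
      have h_0_2 : r 0 2 := h0
      have h_1_1 : r 1 1 := hr.refl 1
      have h_1_3 : r 1 3 := by
        have h := hcomp 1 1 0 2 h_1_1 h_0_2
        rwa [show mulL 1 0 = 1 from by decide, show mulL 1 2 = 3 from by decide] at h
      have h_2_2 : r 2 2 := hr.refl 2
      have h_2_4 : r 2 4 := by
        have h := hcomp 0 2 2 2 h_0_2 h_2_2
        rwa [show mulL 0 2 = 2 from by decide, show mulL 2 2 = 4 from by decide] at h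
      have h_3_3 : r 3 3 := hr.refl 3
      have h_3_5 : r 3 5 := by
        have h := hcomp 0 2 3 3 h_0_2 h_3_3
        rwa [show mulL 0 3 = 3 from by decide, show mulL 2 3 = 5 from by decide] at h
      exact ⟨h_0_2, h_1_3, h_2_4, h_3_5⟩
    · -- pi4 a = 0, b - a = 6
      have h0 : r (0:ZMod 12) (6:ZMod 12) := by
        have h := key 0 (by rw [hv]; decide)
        rw [hd] at h
        rwa [show (0:ZMod 12) + 6 = 6 from by decide] at h
      have h_0_6 : r 0 6 := h0
      have h_11_11 : r 11 11 := hr.refl 11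
      have h_11_5 : r 11 5 := by
        have h := hcomp 0 6 11 11 h_0_6 h_11_11
        rwa [show mulL 0 11 = 11 from by decide, show mulL 6 11 = 5 from by decide] at h
      have h_9_9 : r 9 9 := hr.refl 9
      have h_0_2 : r 0 2 := by
        have h := hcomp 11 5 9 9 h_11_5 h_9_9
        rwa [show mulL 11 9 = 0 from by decide, show mulL 5 9 = 2 from by decide] at h
      have h_1_1 : r 1 1 := hr.refl 1
      have h_4_6 : r 4 6 := by
        have h := hcomp 11 5 1 1 h_11_5 h_1_1
        rwa [show mulL 11 1 = 4 from by decide, show mulL 5 1 = 6 from by decide] at h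
      have h_1_3 : r 1 3 := by
        have h := hcomp 4 6 9 9 h_4_6 h_9_9
        rwa [show mulL 4 9 = 1 from by decide, show mulL 6 9 = 3 from by decide] at h
      have h_10_10 : r 10 10 := hr.refl 10
      have h_2_4 : r 2 4 := by
        have h := hcomp 4 6 10 10 h_4_6 h_10_10
        rwa [show mulL 4 10 = 2 from by decide, show mulL 6 10 = 4 from by decide] at h
      have h_3_5 : r 3 5 := by
        have h := hcomp 4 6 11 11 h_4_6 h_11_11
        rwa [show mulL 4 11 = 3 from by decide, show mulL 6 11 = 5 from by decide] at h
      exact ⟨h_0_2, h_1_3, h_2_4, h_3_5⟩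
    · -- pi4 a = 0, b - a = 10
      have h0 : r (0:ZMod 12) (10:ZMod 12) := by
        have h := key 0 (by rw [hv]; decide)
        rw [hd] at h
        rwa [show (0:ZMod 12) + 10 = 10 from by decide] at h
      have h_0_10 : r 0 10 := h0
      have h_2_2 : r 2 2 := hr.refl 2
      have h_2_0 : r 2 0 := by
        have h := hcomp 0 10 2 2 h_0_10 h_2_2
        rwa [show mulL 0 2 = 2 from by decide, show mulL 10 2 = 0 from by decide] at h
      have h_0_2 : r 0 2 := hr.symm h_2_0
      have h_3_3 : r 3 3 := hr.refl 3
      have h_3_1 : r 3 1 := by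
        have h := hcomp 0 10 3 3 h_0_10 h_3_3
        rwa [show mulL 0 3 = 3 from by decide, show mulL 10 3 = 1 from by decide] at h
      have h_1_3 : r 1 3 := hr.symm h_3_1
      have h_4_4 : r 4 4 := hr.refl 4
      have h_4_2 : r 4 2 := by
        have h := hcomp 4 4 0 10 h_4_4 h_0_10
        rwa [show mulL 4 0 = 4 from by decide, show mulL 4 10 = 2 from by decide] at h
      have h_2_4 : r 2 4 := hr.symm h_4_2
      have h_5_5 : r 5 5 := hr.refl 5
      have h_5_3 : r 5 3 := by
        have h := hcomp 5 5 0 10 h_5_5 h_0_10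
        rwa [show mulL 5 0 = 5 from by decide, show mulL 5 10 = 3 from by decide] at h
      have h_3_5 : r 3 5 := hr.symm h_5_3
      exact ⟨h_0_2, h_1_3, h_2_4, h_3_5⟩
    · -- pi4 a = 1, b - a = 2
      have h0 : r (1:ZMod 12) (3:ZMod 12) := by
        have h := key 1 (by rw [hv]; decide)
        rw [hd] at h
        rwa [show (1:ZMod 12) + 2 = 3 from by decide] at h
      have h_7_7 : r 7 7 := hr.refl 7
      have h_1_3 : r 1 3 := h0
      have h_0_10 : r 0 10 := by
        have h := hcomp 7 7 1 3 h_7_7 h_1_3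
        rwa [show mulL 7 1 = 0 from by decide, show mulL 7 3 = 10 from by decide] at h
      have h_2_2 : r 2 2 := hr.refl 2
      have h_2_0 : r 2 0 := by
        have h := hcomp 0 10 2 2 h_0_10 h_2_2
        rwa [show mulL 0 2 = 2 from by decide, show mulL 10 2 = 0 from by decide] at h
      have h_0_2 : r 0 2 := hr.symm h_2_0
      have h_11_11 : r 11 11 := hr.refl 11
      have h_4_2 : r 4 2 := by
        have h := hcomp 1 3 11 11 h_1_3 h_11_11
        rwa [show mulL 1 11 = 4 from by decide, show mulL 3 11 = 2 from by decide] at h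
      have h_2_4 : r 2 4 := hr.symm h_4_2
      have h_3_5 : r 3 5 := by
        have h := hcomp 2 2 1 3 h_2_2 h_1_3
        rwa [show mulL 2 1 = 3 from by decide, show mulL 2 3 = 5 from by decide] at h
      exact ⟨h_0_2, h_1_3, h_2_4, h_3_5⟩
    · -- pi4 a = 1, b - a = 6
      have h0 : r (1:ZMod 12) (7:ZMod 12) := by
        have h := key 1 (by rw [hv]; decide)
        rw [hd] at h
        rwa [show (1:ZMod 12) + 6 = 7 from by decide] at h
      have h_7_7 : r 7 7 := hr.refl 7
      have h_1_7 : r 1 7 := h0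
      have h_0_2 : r 0 2 := by
        have h := hcomp 7 7 1 7 h_7_7 h_1_7
        rwa [show mulL 7 1 = 0 from by decide, show mulL 7 7 = 2 from by decide] at h
      have h_11_11 : r 11 11 := hr.refl 11
      have h_4_6 : r 4 6 := by
        have h := hcomp 1 7 11 11 h_1_7 h_11_11
        rwa [show mulL 1 11 = 4 from by decide, show mulL 7 11 = 6 from by decide] at h
      have h_9_9 : r 9 9 := hr.refl 9
      have h_1_3 : r 1 3 := by
        have h := hcomp 4 6 9 9 h_4_6 h_9_9
        rwa [show mulL 4 9 = 1 from by decide, show mulL 6 9 = 3 from by decide] at h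
      have h_10_10 : r 10 10 := hr.refl 10
      have h_2_4 : r 2 4 := by
        have h := hcomp 4 6 10 10 h_4_6 h_10_10
        rwa [show mulL 4 10 = 2 from by decide, show mulL 6 10 = 4 from by decide] at h
      have h_3_5 : r 3 5 := by
        have h := hcomp 4 6 11 11 h_4_6 h_11_11
        rwa [show mulL 4 11 = 3 from by decide, show mulL 6 11 = 5 from by decide] at h
      exact ⟨h_0_2, h_1_3, h_2_4, h_3_5⟩
    · -- pi4 a = 1, b - a = 10
      have h0 : r (1:ZMod 12) (11:ZMod 12) := by
        have h := key 1 (by rw [hv]; decide)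
        rw [hd] at h
        rwa [show (1:ZMod 12) + 10 = 11 from by decide] at h
      have h_1_11 : r 1 11 := h0
      have h_1_1 : r 1 1 := hr.refl 1
      have h_2_4 : r 2 4 := by
        have h := hcomp 1 11 1 1 h_1_11 h_1_1
        rwa [show mulL 1 1 = 2 from by decide, show mulL 11 1 = 4 from by decide] at h
      have h_10_10 : r 10 10 := hr.refl 10
      have h_0_2 : r 0 2 := by
        have h := hcomp 2 4 10 10 h_2_4 h_10_10
        rwa [show mulL 2 10 = 0 from by decide, show mulL 4 10 = 2 from by decide] at h
      have h_2_2 : r 2 2 := hr.refl 2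
      have h_3_1 : r 3 1 := by
        have h := hcomp 1 11 2 2 h_1_11 h_2_2
        rwa [show mulL 1 2 = 3 from by decide, show mulL 11 2 = 1 from by decide] at h
      have h_1_3 : r 1 3 := hr.symm h_3_1
      have h_4_4 : r 4 4 := hr.refl 4
      have h_5_3 : r 5 3 := by
        have h := hcomp 4 4 1 11 h_4_4 h_1_11
        rwa [show mulL 4 1 = 5 from by decide, show mulL 4 11 = 3 from by decide] at h
      have h_3_5 : r 3 5 := hr.symm h_5_3
      exact ⟨h_0_2, h_1_3, h_2_4, h_3_5⟩
    · -- pi4 a = 2, b - a = 2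
      have h0 : r (2:ZMod 12) (4:ZMod 12) := by
        have h := key 2 (by rw [hv]; decide)
        rw [hd] at h
        rwa [show (2:ZMod 12) + 2 = 4 from by decide] at h
      have h_2_4 : r 2 4 := h0
      have h_10_10 : r 10 10 := hr.refl 10
      have h_0_2 : r 0 2 := by
        have h := hcomp 2 4 10 10 h_2_4 h_10_10
        rwa [show mulL 2 10 = 0 from by decide, show mulL 4 10 = 2 from by decide] at h
      have h_11_11 : r 11 11 := hr.refl 11
      have h_1_3 : r 1 3 := by
        have h := hcomp 2 4 11 11 h_2_4 h_11_11
        rwa [show mulL 2 11 = 1 from by decide, show mulL 4 11 = 3 from by decide] at h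
      have h_1_1 : r 1 1 := hr.refl 1
      have h_3_5 : r 3 5 := by
        have h := hcomp 2 4 1 1 h_2_4 h_1_1
        rwa [show mulL 2 1 = 3 from by decide, show mulL 4 1 = 5 from by decide] at h
      exact ⟨h_0_2, h_1_3, h_2_4, h_3_5⟩
    · -- pi4 a = 2, b - a = 6
      have h0 : r (2:ZMod 12) (8:ZMod 12) := by
        have h := key 2 (by rw [hv]; decide)
        rw [hd] at h
        rwa [show (2:ZMod 12) + 6 = 8 from by decide] at h
      have h_9_9 : r 9 9 := hr.refl 9
      have h_2_8 : r 2 8 := h0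
      have h_11_5 : r 11 5 := by
        have h := hcomp 9 9 2 8 h_9_9 h_2_8
        rwa [show mulL 9 2 = 11 from by decide, show mulL 9 8 = 5 from by decide] at h
      have h_0_2 : r 0 2 := by
        have h := hcomp 11 5 9 9 h_11_5 h_9_9
        rwa [show mulL 11 9 = 0 from by decide, show mulL 5 9 = 2 from by decide] at h
      have h_1_1 : r 1 1 := hr.refl 1
      have h_4_6 : r 4 6 := by
        have h := hcomp 11 5 1 1 h_11_5 h_1_1
        rwa [show mulL 11 1 = 4 from by decide, show mulL 5 1 = 6 from by decide] at h
      have h_1_3 : r 1 3 := by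
        have h := hcomp 4 6 9 9 h_4_6 h_9_9
        rwa [show mulL 4 9 = 1 from by decide, show mulL 6 9 = 3 from by decide] at h
      have h_10_10 : r 10 10 := hr.refl 10
      have h_2_4 : r 2 4 := by
        have h := hcomp 4 6 10 10 h_4_6 h_10_10
        rwa [show mulL 4 10 = 2 from by decide, show mulL 6 10 = 4 from by decide] at h
      have h_11_11 : r 11 11 := hr.refl 11
      have h_3_5 : r 3 5 := by
        have h := hcomp 4 6 11 11 h_4_6 h_11_11
        rwa [show mulL 4 11 = 3 from by decide, show mulL 6 11 = 5 from by decide] at h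
      exact ⟨h_0_2, h_1_3, h_2_4, h_3_5⟩
    · -- pi4 a = 2, b - a = 10
      have h0 : r (2:ZMod 12) (0:ZMod 12) := by
        have h := key 2 (by rw [hv]; decide)
        rw [hd] at h
        rwa [show (2:ZMod 12) + 10 = 0 from by decide] at h
      have h_2_0 : r 2 0 := h0
      have h_0_2 : r 0 2 := hr.symm h_2_0
      have h_1_1 : r 1 1 := hr.refl 1
      have h_3_1 : r 3 1 := by
        have h := hcomp 1 1 2 0 h_1_1 h_2_0
        rwa [show mulL 1 2 = 3 from by decide, show mulL 1 0 = 1 from by decide] at h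
      have h_1_3 : r 1 3 := hr.symm h_3_1
      have h_2_2 : r 2 2 := hr.refl 2
      have h_4_2 : r 4 2 := by
        have h := hcomp 2 0 2 2 h_2_0 h_2_2
        rwa [show mulL 2 2 = 4 from by decide, show mulL 0 2 = 2 from by decide] at h
      have h_2_4 : r 2 4 := hr.symm h_4_2
      have h_3_3 : r 3 3 := hr.refl 3
      have h_5_3 : r 5 3 := by
        have h := hcomp 2 0 3 3 h_2_0 h_3_3
        rwa [show mulL 2 3 = 5 from by decide, show mulL 0 3 = 3 from by decide] at h
      have h_3_5 : r 3 5 := hr.symm h_5_3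
      exact ⟨h_0_2, h_1_3, h_2_4, h_3_5⟩
    · -- pi4 a = 3, b - a = 2
      have h0 : r (3:ZMod 12) (5:ZMod 12) := by
        have h := key 3 (by rw [hv]; decide)
        rw [hd] at h
        rwa [show (3:ZMod 12) + 2 = 5 from by decide] at h
      have h_5_5 : r 5 5 := hr.refl 5
      have h_3_5 : r 3 5 := h0
      have h_0_10 : r 0 10 := by
        have h := hcomp 5 5 3 5 h_5_5 h_3_5
        rwa [show mulL 5 3 = 0 from by decide, show mulL 5 5 = 10 from by decide] at h
      have h_2_2 : r 2 2 := hr.refl 2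
      have h_2_0 : r 2 0 := by
        have h := hcomp 0 10 2 2 h_0_10 h_2_2
        rwa [show mulL 0 2 = 2 from by decide, show mulL 10 2 = 0 from by decide] at h
      have h_0_2 : r 0 2 := hr.symm h_2_0
      have h_10_10 : r 10 10 := hr.refl 10
      have h_1_3 : r 1 3 := by
        have h := hcomp 10 10 3 5 h_10_10 h_3_5
        rwa [show mulL 10 3 = 1 from by decide, show mulL 10 5 = 3 from by decide] at h
      have h_9_9 : r 9 9 := hr.refl 9
      have h_4_2 : r 4 2 := by
        have h := hcomp 9 9 3 5 h_9_9 h_3_5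
        rwa [show mulL 9 3 = 4 from by decide, show mulL 9 5 = 2 from by decide] at h
      have h_2_4 : r 2 4 := hr.symm h_4_2
      exact ⟨h_0_2, h_1_3, h_2_4, h_3_5⟩
    · -- pi4 a = 3, b - a = 6
      have h0 : r (3:ZMod 12) (9:ZMod 12) := by
        have h := key 3 (by rw [hv]; decide)
        rw [hd] at h
        rwa [show (3:ZMod 12) + 6 = 9 from by decide] at h
      have h_5_5 : r 5 5 := hr.refl 5
      have h_3_9 : r 3 9 := h0
      have h_0_2 : r 0 2 := by
        have h := hcomp 5 5 3 9 h_5_5 h_3_9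
        rwa [show mulL 5 3 = 0 from by decide, show mulL 5 9 = 2 from by decide] at h
      have h_9_9 : r 9 9 := hr.refl 9
      have h_4_6 : r 4 6 := by
        have h := hcomp 9 9 3 9 h_9_9 h_3_9
        rwa [show mulL 9 3 = 4 from by decide, show mulL 9 9 = 6 from by decide] at h
      have h_1_3 : r 1 3 := by
        have h := hcomp 4 6 9 9 h_4_6 h_9_9
        rwa [show mulL 4 9 = 1 from by decide, show mulL 6 9 = 3 from by decide] at h
      have h_10_10 : r 10 10 := hr.refl 10
      have h_2_4 : r 2 4 := by
        have h := hcomp 4 6 10 10 h_4_6 h_10_10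
        rwa [show mulL 4 10 = 2 from by decide, show mulL 6 10 = 4 from by decide] at h
      have h_11_11 : r 11 11 := hr.refl 11
      have h_3_5 : r 3 5 := by
        have h := hcomp 4 6 11 11 h_4_6 h_11_11
        rwa [show mulL 4 11 = 3 from by decide, show mulL 6 11 = 5 from by decide] at h
      exact ⟨h_0_2, h_1_3, h_2_4, h_3_5⟩
    · -- pi4 a = 3, b - a = 10
      have h0 : r (3:ZMod 12) (1:ZMod 12) := by
        have h := key 3 (by rw [hv]; decide)
        rw [hd] at h
        rwa [show (3:ZMod 12) + 10 = 1 from by decide] at h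
      have h_3_1 : r 3 1 := h0
      have h_11_11 : r 11 11 := hr.refl 11
      have h_2_4 : r 2 4 := by
        have h := hcomp 3 1 11 11 h_3_1 h_11_11
        rwa [show mulL 3 11 = 2 from by decide, show mulL 1 11 = 4 from by decide] at h
      have h_10_10 : r 10 10 := hr.refl 10
      have h_0_2 : r 0 2 := by
        have h := hcomp 2 4 10 10 h_2_4 h_10_10
        rwa [show mulL 2 10 = 0 from by decide, show mulL 4 10 = 2 from by decide] at h
      have h_1_3 : r 1 3 := hr.symm h_3_1
      have h_2_2 : r 2 2 := hr.refl 2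
      have h_5_3 : r 5 3 := by
        have h := hcomp 3 1 2 2 h_3_1 h_2_2
        rwa [show mulL 3 2 = 5 from by decide, show mulL 1 2 = 3 from by decide] at h
      have h_3_5 : r 3 5 := hr.symm h_5_3
      exact ⟨h_0_2, h_1_3, h_2_4, h_3_5⟩
  obtain ⟨h02, h13, h24, h35⟩ := base
  have canon : ∀ x : ZMod 12, r x (x + 2) := by
    intro x
    rcases (show ∀ v : ZMod 4, v = 0 ∨ v = 1 ∨ v = 2 ∨ v = 3 from by decide) (pi4 x) with h|h|h|h
    · have hh := shiftE r hr hcomp 0 2 (x - 0) (Or.inl (by rw [map_sub, h]; decide)) h02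
      rwa [show (0:ZMod 12) + (x - 0) = x from by ring, show (2:ZMod 12) + (x - 0) = x + 2 from by ring] at hh
    · have hh := shiftE r hr hcomp 1 3 (x - 1) (Or.inl (by rw [map_sub, h]; decide)) h13
      rwa [show (1:ZMod 12) + (x - 1) = x from by ring, show (3:ZMod 12) + (x - 1) = x + 2 from by ring] at hh
    · have hh := shiftE r hr hcomp 2 4 (x - 2) (Or.inl (by rw [map_sub, h]; decide)) h24
      rwa [show (2:ZMod 12) + (x - 2) = x from by ring, show (4:ZMod 12) + (x - 2) = x + 2 from by ring] at hh
    · have hh := shiftE r hr hcomp 3 5 (x - 3) (Or.inl (by rw [map_sub, h]; decide)) h35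
      rwa [show (3:ZMod 12) + (x - 3) = x from by ring, show (5:ZMod 12) + (x - 3) = x + 2 from by ring] at hh
  have c4 : ∀ x : ZMod 12, r x (x + 4) := by
    intro x
    refine hr.trans (canon x) ?_
    have h := canon (x + 2)
    rwa [add_assoc, show (2:ZMod 12) + 2 = 4 from by decide] at h
  have c6 : ∀ x : ZMod 12, r x (x + 6) := by
    intro x
    refine hr.trans (c4 x) ?_
    have h := canon (x + 4)
    rwa [add_assoc, show (4:ZMod 12) + 2 = 6 from by decide] at h
  have c8 : ∀ x : ZMod 12, r x (x + 8) := by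
    intro x
    refine hr.trans (c6 x) ?_
    have h := canon (x + 6)
    rwa [add_assoc, show (6:ZMod 12) + 2 = 8 from by decide] at h
  have c10 : ∀ x : ZMod 12, r x (x + 10) := by
    intro x
    refine hr.trans (c8 x) ?_
    have h := canon (x + 8)
    rwa [add_assoc, show (8:ZMod 12) + 2 = 10 from by decide] at h
  intro x y hxy
  have hd : y - x = 0 ∨ y - x = 2 ∨ y - x = 4 ∨ y - x = 6 ∨ y - x = 8 ∨ y - x = 10 :=
    (show ∀ x y : ZMod 12, Even (x - y) → (y - x = 0 ∨ y - x = 2 ∨ y - x = 4 ∨ y - x = 6 ∨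
        y - x = 8 ∨ y - x = 10) from by decide) x y hxy
  rcases hd with h|h|h|h|h|h
  · rw [sub_eq_zero] at h; rw [h]; exact hr.refl x
  · have hy : y = x + 2 := by linear_combination h
    rw [hy]; exact canon x
  · have hy : y = x + 4 := by linear_combination h
    rw [hy]; exact c4 x
  · have hy : y = x + 6 := by linear_combination h
    rw [hy]; exact c6 x
  · have hy : y = x + 8 := by linear_combination h
    rw [hy]; exact c8 x
  · have hy : y = x + 10 := by linear_combination h
    rw [hy]; exact c10 x

/-- If one related pair has odd difference, the relation is total. -/
lemma LB1 (a b : ZMod 12) (hab : r a b) (hodd : ¬ Even (a - b)) :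
    ∀ x y : ZMod 12, r x y := by
  have hsq := hcomp a b a b hab hab
  simp only [mulL, (show ∀ z : ZMod 12, t z z = 0 from by decide), add_zero] at hsq
  have hc : Even ((a + a) - (b + b)) ∧ pi4 (a + a) ≠ pi4 (b + b) :=
    (show ∀ a b : ZMod 12, ¬Even (a - b) →
        (Even ((a + a) - (b + b)) ∧ pi4 (a + a) ≠ pi4 (b + b)) from by decide) a b hodd
  have hE : ∀ x y : ZMod 12, Even (x - y) → r x y :=
    LB2 r hr hcomp (a + a) (b + b) hsq hc.1 hc.2
  intro x y
  by_cases he : Even (x - y)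
  · exact hE x y he
  · have hkey : (Even (x - a) ∧ Even ((x - y) - (x - a) - (a - b))) ∨
        (Even ((x - a) + (a - b)) ∧ Even ((x - y) - (x - a))) :=
      (show ∀ d e p : ZMod 12, ¬Even d → ¬Even e →
          ((Even p ∧ Even (e - p - d)) ∨ (Even (p + d) ∧ Even (e - p))) from by decide)
        (a - b) (x - y) (x - a) hodd he
    rcases hkey with ⟨h1, h2⟩ | ⟨h1, h2⟩
    · have hby : Even (b - y) := by
        have e : b - y = (x - y) - (x - a) - (a - b) := by ring
        rw [e]; exact h2
      exact hr.trans (hE x a h1) (hr.trans hab (hE b y hby))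
    · have hxb : Even (x - b) := by
        have e : x - b = (x - a) + (a - b) := by ring
        rw [e]; exact h1
      have hay : Even (a - y) := by
        have e : a - y = (x - y) - (x - a) := by ring
        rw [e]; exact h2
      exact hr.trans (hE x b hxb) (hr.trans (hr.symm hab) (hE a y hay))

end Aux

theorem stmt_2 (r : ZMod 12 → ZMod 12 → Prop) (hr : Equivalence r)
    (hcomp : ∀ a b c d : ZMod 12, r a b → r c d → r (mulL a c) (mulL b d)) :
    (∀ x y : ZMod 12, r x y ↔ x = y) ∨
    (∀ x y : ZMod 12, r x y ↔ x - y ∈ ({0, 4, 8} : Set (ZMod 12))) ∨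
    (∀ x y : ZMod 12, r x y ↔ Even (x - y)) ∨
    (∀ x y : ZMod 12, r x y) := by
  by_cases hO : ∃ x y : ZMod 12, r x y ∧ ¬ Even (x - y)
  · obtain ⟨a, b, hab, hodd⟩ := hO
    exact Or.inr (Or.inr (Or.inr (LB1 r hr hcomp a b hab hodd)))
  · push_neg at hO
    by_cases hT : ∃ x y : ZMod 12, r x y ∧ pi4 x ≠ pi4 y
    · obtain ⟨a, b, hab, hne⟩ := hT
      have hE := LB2 r hr hcomp a b hab (hO a b hab) hne
      exact Or.inr (Or.inr (Or.inl fun x y => ⟨fun h => hO x y h, fun h => hE x y h⟩))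
    · push_neg at hT
      by_cases hF : ∃ x y : ZMod 12, r x y ∧ x ≠ y
      · obtain ⟨a, b, hab, hne⟩ := hF
        have h4 : pi4 a = pi4 b := hT a b hab
        have hδ : b - a = 4 ∨ b - a = 8 := by
          have := (show ∀ a b : ZMod 12, a ≠ b → pi4 a = pi4 b → (b - a = 4 ∨ b - a = 8)
            from by decide) a b hne h4
          exact this
        have ftrans : ∀ c : ZMod 12, r (a + c) (b + c) := by
          intro c
          have h := hcomp a b c c hab (hr.refl c)
          simp only [mulL] at h
          have ht : t a c = t b c := by unfold t; rw [h4]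
          rw [ht] at h
          rcases (show ∀ x y : ZMod 12, t x y = 0 ∨ t x y = 4 from by decide) b c with h0 | h0
          · rwa [h0, add_zero, add_zero] at h
          · rw [h0] at h
            have h2 := shiftE r hr hcomp (a + c + 4) (b + c + 4) 8 (Or.inl (by decide)) h
            have e : ∀ z : ZMod 12, z + 4 + 8 = z := by
              intro z
              rw [add_assoc, show (4:ZMod 12) + 8 = 0 from by decide, add_zero]
            rwa [e, e] at h2
        have hstep : ∀ x : ZMod 12, r x (x + (b - a)) := by
          intro x
          have h := ftrans (x - a)
          rwa [show a + (x - a) = x from by ring, show b + (x - a) = x + (b - a) from by ring] at h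
        have s48 : (∀ x : ZMod 12, r x (x + 4)) ∧ (∀ x : ZMod 12, r x (x + 8)) := by
          rcases hδ with hd | hd
          · have s4 : ∀ x : ZMod 12, r x (x + 4) := by
              intro x; have h := hstep x; rwa [hd] at h
            refine ⟨s4, fun x => hr.trans (s4 x) ?_⟩
            have h := s4 (x + 4)
            rwa [add_assoc, show (4:ZMod 12) + 4 = 8 from by decide] at h
          · have s8 : ∀ x : ZMod 12, r x (x + 8) := by
              intro x; have h := hstep x; rwa [hd] at h
            refine ⟨fun x => hr.trans (s8 x) ?_, s8⟩
            have h := s8 (x + 8)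
            rwa [add_assoc, show (8:ZMod 12) + 8 = 4 from by decide] at h
        refine Or.inr (Or.inl fun x y => ⟨fun h => ?_, fun h => ?_⟩)
        · have hm := (show ∀ x y : ZMod 12, pi4 x = pi4 y → (x - y = 0 ∨ x - y = 4 ∨ x - y = 8)
            from by decide) x y (hT x y h)
          simpa [Set.mem_insert_iff, Set.mem_singleton_iff] using hm
        · simp only [Set.mem_insert_iff, Set.mem_singleton_iff] at h
          rcases h with h | h | h
          · rw [sub_eq_zero] at h; rw [h]; exact hr.refl y
          · have hx : x = y + 4 := by linear_combination h
            rw [hx]; exact hr.symm (s48.1 y)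
          · have hx : x = y + 8 := by linear_combination h
            rw [hx]; exact hr.symm (s48.2 y)
      · push_neg at hF
        exact Or.inl fun x y => ⟨fun h => hF x y h, fun h => by rw [h]; exact hr.refl y⟩
end

section
/- Vaughan–Lee's loop L does not split into a direct product of loops of prime power order: there exist no binary operations op₁ on Fin 4 and op₂ on Fin 3 and no bijection e : ZMod 12 ≃ Fin 4 × Fin 3 such that e (x * y) = (op₁ (e x).1 (e y).1, op₂ (e x).2 (e y).2) for all x, y ∈ ZMod 12. -/
/-!
If `L ≅ A × B` with `|A| = 4`, `|B| = 3`, then the fibre of the second projection through the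
identity `0` is a submagma of `L` with four elements. But `L` has no such submagma: its submagmas
containing `0` are `{0}`, `{0, 6}`, `{0, 4, 8}`, the even residues and `L` itself. Concretely,
every element outside `{0, 4, 6, 8}` already has at least five distinct products of copies of
itself, while `{0, 4, 6, 8}` is not closed since `4 * 6 = 10`.
-/

open Finset

section ProductDecomposition

variable {α β γ : Type*}

theorem card_filter_snd_equiv_eq [Fintype α] [Fintype β] [DecidableEq γ] (e : α ≃ β × γ)
    (c : γ) : #{x | (e x).2 = c} = Fintype.card β :=
  calc #{x | (e x).2 = c} = #(univ ×ˢ {c} : Finset (β × γ)) :=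
        card_equiv e (by
          simp only [mem_filter, mem_product, mem_univ, mem_singleton, true_and, implies_true])
    _ = Fintype.card β := by simp

theorem snd_mul_eq_of_snd_eq {mul : α → α → α} {op₁ : β → β → β} {op₂ : γ → γ → γ}
    {f : α → β × γ} (hf : ∀ x y, f (mul x y) = (op₁ (f x).1 (f y).1, op₂ (f x).2 (f y).2))
    {c : γ} (hc : op₂ c c = c) {x y : α} (hx : (f x).2 = c) (hy : (f y).2 = c) :
    (f (mul x y)).2 = c := by
  rw [hf, hx, hy, hc]

end ProductDecomposition

section VaughanLeeLoop

theorem mulL_zero_zero : mulL 0 0 = 0 := by decide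

def powersL (a : ZMod 12) : Finset (ZMod 12) :=
  {0, a, mulL a a, mulL (mulL a a) a, mulL (mulL a a) (mulL a a), mulL a (mulL (mulL a a) a)}

theorem four_lt_card_powersL :
    ∀ a : ZMod 12, a ∉ ({0, 4, 6, 8} : Finset (ZMod 12)) → 4 < #(powersL a) := by
  decide

theorem powersL_subset {S : Finset (ZMod 12)} (hS : ∀ x ∈ S, ∀ y ∈ S, mulL x y ∈ S)
    (h0 : 0 ∈ S) {a : ZMod 12} (ha : a ∈ S) : powersL a ⊆ S := by
  have h2 := hS a ha a ha
  have h3 := hS _ h2 a ha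
  simp only [powersL, insert_subset_iff, singleton_subset_iff]
  exact ⟨h0, ha, h2, h3, hS _ h2 _ h2, hS a ha _ h3⟩

theorem card_ne_four_of_mulL_closed {S : Finset (ZMod 12)}
    (hS : ∀ x ∈ S, ∀ y ∈ S, mulL x y ∈ S) (h0 : 0 ∈ S) : #S ≠ 4 := by
  intro hcard
  have hsub : S ⊆ {0, 4, 6, 8} := by
    intro a ha
    by_contra hout
    have := card_le_card (powersL_subset hS h0 ha)
    have := four_lt_card_powersL a hout
    omega
  have hS_eq : S = {0, 4, 6, 8} := eq_of_subset_of_card_le hsub (by rw [hcard]; decide)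
  have h10 : mulL 4 6 ∈ S := hS 4 (by simp [hS_eq]) 6 (by simp [hS_eq])
  rw [hS_eq] at h10
  revert h10
  decide

end VaughanLeeLoop

theorem stmt_3 :
    ¬ ∃ (op₁ : Fin 4 → Fin 4 → Fin 4) (op₂ : Fin 3 → Fin 3 → Fin 3)
        (e : ZMod 12 ≃ Fin 4 × Fin 3),
        ∀ x y : ZMod 12,
          e (mulL x y) = (op₁ (e x).1 (e y).1, op₂ (e x).2 (e y).2) := by
  rintro ⟨op₁, op₂, e, he⟩
  have hidem : op₂ (e 0).2 (e 0).2 = (e 0).2 := by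
    simpa [mulL_zero_zero] using (congrArg Prod.snd (he 0 0)).symm
  refine card_ne_four_of_mulL_closed (S := {x | (e x).2 = (e 0).2}) ?_ (by simp) ?_
  · intro x hx y hy
    simp only [mem_filter, mem_univ, true_and] at hx hy ⊢
    exact snd_mul_eq_of_snd_eq he hidem hx hy
  · rw [card_filter_snd_equiv_eq]
    simp
end

section
/- (Lemma: L is term equivalent to (ZMod 12, +, t).) Both the binary addition function (fun x : Fin 2 → ZMod 12 => x 0 + x 1) and the function (fun x : Fin 2 → ZMod 12 => t (x 0) (x 1)) belong to Clo_2(L), the closure of the two binary projections under the pointwise loop operation. In particular, for all x, y ∈ ZMod 12 one has t x y = (((x*y)*(x*y))*((x*y)*(x*y))) * ((8*x) * (8*y)). -/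
/-- `InClo k h` means `h` is a `k`-ary term function of `L`:
`h` lies in the closure of the projections under the pointwise loop operation. -/
inductive InClo (k : ℕ) : ((Fin k → ZMod 12) → ZMod 12) → Prop
  | proj (i : Fin k) : InClo k (fun x => x i)
  | mul {g h : (Fin k → ZMod 12) → ZMod 12} :
      InClo k g → InClo k h → InClo k (fun x => mulL (g x) (h x))


lemma inclo_congr {k} {f g : (Fin k → ZMod 12) → ZMod 12} (h : InClo k f)
    (e : ∀ x, f x = g x) : InClo k g := by
  have : f = g := funext e
  exact this ▸ h

lemma l8 : ∀ a : ZMod 12,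
    mulL (mulL (mulL a a) (mulL a a)) (mulL (mulL a a) (mulL a a)) = 8 * a := by decide

lemma tid : ∀ x y : ZMod 12,
    t x y =
      mulL (mulL (mulL (mulL x y) (mulL x y)) (mulL (mulL x y) (mulL x y)))
        (mulL (8 * x) (8 * y)) := by decide

lemma addid : ∀ x y : ZMod 12, x + y = mulL (mulL x y) (mulL (t x y) (t x y)) := by decide

theorem stmt_4 :
    InClo 2 (fun x : Fin 2 → ZMod 12 => x 0 + x 1) ∧
    InClo 2 (fun x : Fin 2 → ZMod 12 => t (x 0) (x 1)) ∧
    (∀ x y : ZMod 12,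
      t x y =
        mulL
          (mulL (mulL (mulL x y) (mulL x y)) (mulL (mulL x y) (mulL x y)))
          (mulL (8 * x) (8 * y))) := by
  have p0 := InClo.proj (k := 2) 0
  have p1 := InClo.proj (k := 2) 1
  have h8 : ∀ i : Fin 2, InClo 2 (fun x => 8 * x i) := fun i =>
    inclo_congr
      (InClo.mul (InClo.mul (InClo.mul (InClo.proj i) (InClo.proj i))
          (InClo.mul (InClo.proj i) (InClo.proj i)))
        (InClo.mul (InClo.mul (InClo.proj i) (InClo.proj i))
          (InClo.mul (InClo.proj i) (InClo.proj i))))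
      (fun x => l8 (x i))
  have w := InClo.mul p0 p1
  have tIC : InClo 2 (fun x : Fin 2 → ZMod 12 => t (x 0) (x 1)) :=
    inclo_congr (InClo.mul (InClo.mul (InClo.mul w w) (InClo.mul w w))
        (InClo.mul (h8 0) (h8 1)))
      (fun x => (tid (x 0) (x 1)).symm)
  refine ⟨?_, tIC, tid⟩
  exact inclo_congr (InClo.mul w (InClo.mul tIC tIC)) (fun x => (addid (x 0) (x 1)).symm)
end

section
/- (Clo_k(+) ⊕ W_k is closed under t.) Let k ∈ ℕ, let a, b : Fin k → ZMod 12 and let w, v ∈ W_k. Then the function g : (Fin k → ZMod 12) → ZMod 12 given by g x := t (∑ i, a i * x i + w x) (∑ i, b i * x i + v x) satisfies g x = t (∑ i, a i * x i) (∑ i, b i * x i) for all x, and g belongs to W_k. -/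
/-- `Wset k` is the set of functions `w : (ZMod 12)^k → ZMod 12` taking values in
`C = {0,4,8}`, vanishing on tuples of even elements, invariant under negation, and
invariant under translation by tuples from `C` (i.e. factoring through `(ZMod 4)^k`). -/
def Wset (k : ℕ) : Set ((Fin k → ZMod 12) → ZMod 12) :=
  { w |
    (∀ x, w x ∈ ({0, 4, 8} : Set (ZMod 12))) ∧
    (∀ x, (∀ i, Even (x i)) → w x = 0) ∧
    (∀ x, w (-x) = w x) ∧
    (∀ x c, (∀ i, c i ∈ ({0, 4, 8} : Set (ZMod 12))) → w (x + c) = w x) }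

lemma pi4_C {z : ZMod 12} (h : z ∈ ({0, 4, 8} : Set (ZMod 12))) : pi4 z = 0 := by
  rcases h with h | h | h <;> subst h <;> decide

lemma t_congr {x x' y y' : ZMod 12} (hx : pi4 x = pi4 x') (hy : pi4 y = pi4 y') :
    t x y = t x' y' := by simp [t, hx, hy]

lemma pi4_even {z : ZMod 12} (h : Even z) : Even (pi4 z) := by
  obtain ⟨r, rfl⟩ := h; exact ⟨pi4 r, by rw [map_add]⟩

theorem stmt_6 (k : ℕ) (a b : Fin k → ZMod 12)
    (w v : (Fin k → ZMod 12) → ZMod 12) (hw : w ∈ Wset k) (hv : v ∈ Wset k) :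
    (∀ x, t ((∑ i, a i * x i) + w x) ((∑ i, b i * x i) + v x)
        = t (∑ i, a i * x i) (∑ i, b i * x i)) ∧
    (fun x => t ((∑ i, a i * x i) + w x) ((∑ i, b i * x i) + v x)) ∈ Wset k := by
  obtain ⟨hw1, hw2, hw3, hw4⟩ := hw
  obtain ⟨hv1, hv2, hv3, hv4⟩ := hv
  have key : ∀ x, t ((∑ i, a i * x i) + w x) ((∑ i, b i * x i) + v x)
      = t (∑ i, a i * x i) (∑ i, b i * x i) := by
    intro x
    exact t_congr (by rw [map_add, pi4_C (hw1 x), add_zero])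
      (by rw [map_add, pi4_C (hv1 x), add_zero])
  refine ⟨key, ?_, ?_, ?_, ?_⟩
  · intro x
    simp only [key x, t]
    split <;> simp
  · intro x hx
    show t _ _ = 0
    rw [key x]
    have ha : Even (pi4 (∑ i, a i * x i)) := by
      rw [map_sum]
      apply Finset.even_sum
      intro i _
      rw [map_mul]
      exact (pi4_even (hx i)).mul_left _
    simp only [t]
    rw [if_neg]
    rintro (⟨h1, _⟩ | ⟨h1, _⟩) <;> rw [h1] at ha <;> obtain ⟨r, hr⟩ := ha <;>
      revert hr <;> revert r <;> decide
  · intro x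
    show t _ _ = t _ _
    rw [key (-x), key x]
    have ea : pi4 (∑ i, a i * (-x) i) = - pi4 (∑ i, a i * x i) := by
      rw [← map_neg]; congr 1
      rw [← Finset.sum_neg_distrib]
      exact Finset.sum_congr rfl fun i _ => by simp
    have eb : pi4 (∑ i, b i * (-x) i) = - pi4 (∑ i, b i * x i) := by
      rw [← map_neg]; congr 1
      rw [← Finset.sum_neg_distrib]
      exact Finset.sum_congr rfl fun i _ => by simp
    have h13 : ∀ u : ZMod 4, -u = 1 ↔ u = 3 := by decide
    have h31 : ∀ u : ZMod 4, -u = 3 ↔ u = 1 := by decide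
    simp only [t, ea, eb, h13, h31]
    exact if_congr or_comm rfl rfl
  · intro x c hc
    show t _ _ = t _ _
    rw [key (x + c), key x]
    have ha : pi4 (∑ i, a i * (x + c) i) = pi4 (∑ i, a i * x i) := by
      rw [map_sum, map_sum]
      refine Finset.sum_congr rfl fun i _ => ?_
      simp only [Pi.add_apply, mul_add, map_add, map_mul, pi4_C (hc i), mul_zero, add_zero]
    have hb : pi4 (∑ i, b i * (x + c) i) = pi4 (∑ i, b i * x i) := by
      rw [map_sum, map_sum]
      refine Finset.sum_congr rfl fun i _ => ?_
      simp only [Pi.add_apply, mul_add, map_add, map_mul, pi4_C (hc i), mul_zero, add_zero]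
    exact t_congr ha hb
end

section
/- (Lemma 2.4(1).) Let k ≥ 1 and let r : Fin k → ZMod 12 be such that r i is odd for some i. Define f_r : (Fin k → ZMod 12) → ZMod 12 by f_r x = 4 if either x i − r i ∈ {0,4,8} for every i, or x i + r i ∈ {0,4,8} for every i, and f_r x = 0 otherwise. Then f_r ∈ Clo_k(L). -/
/-!
Every term function of `L` has the form `x ↦ n ⬝ᵥ x + F x` with `F` valued in the subgroup
`{0, 4, 8}`, and modulo 4 the loop product is addition. Hence the term functions with `n = 0`
form an additive group. Comparing the two bracketings of a product of four terms with linear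
parts `a, b, c, -(a + b + c)` puts the associator of the cocycle `t`, evaluated at linear forms,
into this group, and with it (by an identity on `ZMod 4`) every `x ↦ t (α ⬝ᵥ x) (β ⬝ᵥ x)`.
Now `t p (l - p) = 4` exactly when `p` is odd and `l ≡ 0 mod 4`, and the indicator of `d = e = 0`
on `(ZMod 4)²` is, modulo 3, a sum of indicators of `a d + c e = 0`; so any number of linear conditions
modulo 4 can be imposed on an odd linear form. Finally `x ≡ ± r mod 4` iff `x i₀` is odd and
`r i₀ * x i ≡ r i * x i₀` for all `i`, where `r i₀` is odd.
-/

namespace VaughanLee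

open Matrix

def t4 (p q : ZMod 4) : ZMod 12 := if (p = 1 ∧ q = 3) ∨ (p = 3 ∧ q = 1) then 4 else 0

lemma t_eq_t4 (x y : ZMod 12) : t x y = t4 (pi4 x) (pi4 y) := rfl

lemma three_mul_t4 : ∀ p q : ZMod 4, 3 * t4 p q = 0 := by decide

lemma pi4_eq_zero_of_three_mul : ∀ z : ZMod 12, 3 * z = 0 → pi4 z = 0 := by decide

def assoc4 (a b c : ZMod 4) : ZMod 12 := t4 b c + t4 a (b + c) - t4 a b - t4 (a + b) c

lemma t4_eq_assoc4_add_assoc4 : ∀ p q : ZMod 4, t4 p q = assoc4 q p p + assoc4 q p (p - q) := by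
  decide

lemma t4_sub_self : ∀ p l : ZMod 4, t4 p (l - p) = if (p = 1 ∨ p = 3) ∧ l = 0 then 4 else 0 := by
  decide

-- One functional `(a, c)` on `(ZMod 4)²` for each of the ten possible kernels; a nonzero vector
-- lies in three or six of these kernels, so only the zero vector survives the sum.
def kernelReps : List (ℕ × ℕ) :=
  [(0, 0), (0, 1), (0, 2), (1, 0), (1, 1), (1, 2), (1, 3), (2, 0), (2, 1), (2, 2)]

lemma ite_and_eq_zero_eq_sum : ∀ d e : ZMod 4, (if d = 0 ∧ e = 0 then (4 : ZMod 12) else 0) =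
    (kernelReps.map fun ac => if (ac.1 : ZMod 4) * d + ac.2 * e = 0 then 4 else 0).sum := by
  decide

variable {k : ℕ}

-- `n` is the level of the term function `x ↦ n ⬝ᵥ x + F x`.
def IsTerm (n : Fin k → ZMod 12) (F : (Fin k → ZMod 12) → ZMod 12) : Prop :=
  (∀ x, 3 * F x = 0) ∧ InClo k (fun x => n ⬝ᵥ x + F x)

namespace IsTerm

variable {n m : Fin k → ZMod 12} {F G : (Fin k → ZMod 12) → ZMod 12}

lemma congr (h : IsTerm n F) (hFG : ∀ x, F x = G x) : IsTerm n G := funext hFG ▸ h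

lemma of_eq_level (h : IsTerm n F) (hnm : n = m) : IsTerm m F := hnm ▸ h

lemma pi4_add_apply (h : IsTerm n F) (x : Fin k → ZMod 12) :
    pi4 (n ⬝ᵥ x + F x) = pi4 (n ⬝ᵥ x) := by
  rw [map_add, pi4_eq_zero_of_three_mul _ (h.1 x), add_zero]

lemma mul (hF : IsTerm n F) (hG : IsTerm m G) :
    IsTerm (n + m) (fun x => F x + G x + t4 (pi4 (n ⬝ᵥ x)) (pi4 (m ⬝ᵥ x))) := by
  refine ⟨fun x => by linear_combination hF.1 x + hG.1 x + three_mul_t4 _ _, ?_⟩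
  convert InClo.mul hF.2 hG.2 using 2 with x
  rw [mulL, t_eq_t4, hF.pi4_add_apply, hG.pi4_add_apply, add_dotProduct]
  ring

lemma add (hF : IsTerm 0 F) (hG : IsTerm 0 G) : IsTerm 0 (fun x => F x + G x) :=
  ((hF.mul hG).of_eq_level (add_zero 0)).congr fun x => by
    rw [zero_dotProduct, map_zero, show t4 0 0 = 0 from rfl, add_zero]

lemma sub (hF : IsTerm 0 F) (hG : IsTerm 0 G) : IsTerm 0 (fun x => F x - G x) :=
  ((hF.add hG).add hG).congr fun x => by linear_combination hG.1 x

lemma exists_nsmul_succ (h : IsTerm n F) (c : ℕ) : ∃ G, IsTerm ((c + 1) • n) G := by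
  induction c with
  | zero => exact ⟨F, by simpa using h⟩
  | succ c ih =>
    obtain ⟨G, hG⟩ := ih
    exact ⟨_, (hG.mul h).of_eq_level (succ_nsmul n (c + 1)).symm⟩

lemma inClo (h : IsTerm 0 F) : InClo k F := by
  simpa using h.2

end IsTerm

lemma isTerm_single (i : Fin k) : IsTerm (Pi.single i 1) 0 :=
  ⟨fun _ => mul_zero 3, by simpa using InClo.proj i⟩

def termLevels [NeZero k] : AddSubmonoid (Fin k → ZMod 12) where
  carrier := {n | ∃ F, IsTerm n F}
  add_mem' := fun ⟨_, hF⟩ ⟨_, hG⟩ => ⟨_, hF.mul hG⟩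
  zero_mem' := by
    obtain ⟨G, hG⟩ := (isTerm_single (0 : Fin k)).exists_nsmul_succ 11
    refine ⟨G, hG.of_eq_level ?_⟩
    rw [← Nat.cast_smul_eq_nsmul (ZMod 12)]
    exact zero_smul _ _

lemma exists_isTerm [NeZero k] (n : Fin k → ZMod 12) : ∃ F, IsTerm n F := by
  show n ∈ termLevels
  rw [← Finset.univ_sum_single n]
  refine AddSubmonoid.sum_mem _ fun i _ => ?_
  have hsingle : Pi.single i (n i) = (n i).val • (Pi.single i 1 : Fin k → ZMod 12) := by
    rw [← Pi.single_smul, nsmul_one, ZMod.natCast_zmod_val]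
  rw [hsingle]
  exact termLevels.nsmul_mem (show _ ∈ termLevels from ⟨0, isTerm_single i⟩) _

lemma pi4_dotProduct_add (n m x : Fin k → ZMod 12) :
    pi4 ((n + m) ⬝ᵥ x) = pi4 (n ⬝ᵥ x) + pi4 (m ⬝ᵥ x) := by
  rw [add_dotProduct, map_add]

lemma pi4_dotProduct_nsmul (c : ℕ) (n x : Fin k → ZMod 12) :
    pi4 ((c • n) ⬝ᵥ x) = c * pi4 (n ⬝ᵥ x) := by
  rw [smul_dotProduct, map_nsmul, nsmul_eq_mul]

section LevelZero

variable [NeZero k]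

lemma isTerm_zero_zero : IsTerm (0 : Fin k → ZMod 12) (fun _ => 0) := by
  obtain ⟨F, hF⟩ := exists_isTerm (0 : Fin k → ZMod 12)
  exact ((hF.add hF).add hF).congr fun x => by linear_combination hF.1 x

lemma isTerm_zero_list_sum {α : Type*} (l : List α) {f : α → (Fin k → ZMod 12) → ZMod 12}
    (hf : ∀ a ∈ l, IsTerm 0 (f a)) : IsTerm 0 (fun x => (l.map fun a => f a x).sum) := by
  induction l with
  | nil => exact isTerm_zero_zero
  | cons a l ih =>
    simp only [List.map_cons, List.sum_cons]
    exact (hf a List.mem_cons_self).add (ih fun b hb => hf b (List.mem_cons_of_mem a hb))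

lemma isTerm_zero_assoc4 (a b c : Fin k → ZMod 12) :
    IsTerm 0 (fun x => assoc4 (pi4 (a ⬝ᵥ x)) (pi4 (b ⬝ᵥ x)) (pi4 (c ⬝ᵥ x))) := by
  obtain ⟨Fa, ha⟩ := exists_isTerm a
  obtain ⟨Fb, hb⟩ := exists_isTerm b
  obtain ⟨Fc, hc⟩ := exists_isTerm c
  obtain ⟨Fd, hd⟩ := exists_isTerm (-(a + b + c))
  have hleft := (((ha.mul hb).mul hc).mul hd).of_eq_level (add_neg_cancel _)
  have hright := ((ha.mul (hb.mul hc)).mul hd).of_eq_level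
    (by rw [← add_assoc, add_neg_cancel])
  refine (hright.sub hleft).congr fun x => ?_
  simp only [assoc4, pi4_dotProduct_add, add_assoc]
  ring

lemma isTerm_zero_t4 (a b : Fin k → ZMod 12) :
    IsTerm 0 (fun x => t4 (pi4 (a ⬝ᵥ x)) (pi4 (b ⬝ᵥ x))) :=
  ((isTerm_zero_assoc4 b a a).add (isTerm_zero_assoc4 b a (a - b))).congr fun x => by
    rw [t4_eq_assoc4_add_assoc4, sub_dotProduct, map_sub]

lemma isTerm_zero_ite_odd_and_forall (p : Fin k → ZMod 12) (ls : List (Fin k → ZMod 12)) :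
    IsTerm 0 (fun x => if (pi4 (p ⬝ᵥ x) = 1 ∨ pi4 (p ⬝ᵥ x) = 3) ∧
      ∀ m ∈ ls, pi4 (m ⬝ᵥ x) = 0 then 4 else 0) := by
  suffices h : ∀ l, IsTerm 0 (fun x => if (pi4 (p ⬝ᵥ x) = 1 ∨ pi4 (p ⬝ᵥ x) = 3) ∧
      ∀ m ∈ l :: ls, pi4 (m ⬝ᵥ x) = 0 then 4 else 0) by
    simpa using h 0
  induction ls with
  | nil =>
    intro l
    refine (isTerm_zero_t4 p (l - p)).congr fun x => ?_
    simp [sub_dotProduct, t4_sub_self]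
  | cons w ls ih =>
    intro l
    refine (isTerm_zero_list_sum kernelReps fun ac _ => ih (ac.1 • l + ac.2 • w)).congr
      fun x => ?_
    simp only [List.forall_mem_cons, pi4_dotProduct_add, pi4_dotProduct_nsmul]
    by_cases hO : pi4 (p ⬝ᵥ x) = 1 ∨ pi4 (p ⬝ᵥ x) = 3
    · by_cases hR : ∀ m ∈ ls, pi4 (m ⬝ᵥ x) = 0
      · simp only [hO, eq_true hR, true_and, and_true]
        exact (ite_and_eq_zero_eq_sum _ _).symm
      · simp [hR]
    · simp [hO]

end LevelZero

lemma eq_one_or_eq_three_of_odd {p : ZMod 4} (hp : Odd p) : p = 1 ∨ p = 3 := by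
  obtain ⟨m, rfl⟩ := hp
  revert m
  decide

lemma mem_zero_four_eight_iff : ∀ z : ZMod 12, z ∈ ({0, 4, 8} : Set (ZMod 12)) ↔ pi4 z = 0 := by
  simp only [Set.mem_insert_iff, Set.mem_singleton_iff]
  decide

lemma forall_eq_or_forall_eq_neg_iff {ι : Type*} {a y : ι → ZMod 4} {i₀ : ι}
    (ha : a i₀ = 1 ∨ a i₀ = 3) :
    ((∀ i, y i = a i) ∨ ∀ i, y i = -a i) ↔
      (y i₀ = 1 ∨ y i₀ = 3) ∧ ∀ i, a i₀ * y i = a i * y i₀ := by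
  constructor
  · rintro (hy | hy)
    · refine ⟨hy i₀ ▸ ha, fun i => ?_⟩
      rw [hy i, hy i₀]
      ring
    · refine ⟨?_, fun i => ?_⟩
      · rw [hy i₀]
        rcases ha with h | h <;> rw [h] <;> decide
      · rw [hy i, hy i₀]
        ring
  · rintro ⟨hy₀, hcross⟩
    have hsq : a i₀ * a i₀ = 1 := by rcases ha with h | h <;> rw [h] <;> decide
    obtain ⟨s, hs, hys⟩ : ∃ s : ZMod 4, (s = 1 ∨ s = -1) ∧ y i₀ = s * a i₀ := by
      rcases ha with h | h <;> rcases hy₀ with h' | h' <;> rw [h, h'] <;> decide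
    have hy : ∀ i, y i = s * a i := fun i => by
      linear_combination (s * a i - y i) * hsq + a i₀ * hcross i + a i₀ * a i * hys
    rcases hs with rfl | rfl
    · exact Or.inl fun i => by rw [hy i, one_mul]
    · exact Or.inr fun i => by rw [hy i, neg_one_mul]

def crossForms (r : Fin k → ZMod 12) (i₀ : Fin k) : List (Fin k → ZMod 12) :=
  (List.finRange k).map fun i => Pi.single i (r i₀) - Pi.single i₀ (r i)

lemma forall_sub_mem_or_forall_add_mem_iff {r : Fin k → ZMod 12} {i₀ : Fin k} (hr : Odd (r i₀))
    (x : Fin k → ZMod 12) :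
    ((∀ i, x i - r i ∈ ({0, 4, 8} : Set (ZMod 12))) ∨
      ∀ i, x i + r i ∈ ({0, 4, 8} : Set (ZMod 12))) ↔
      (pi4 (Pi.single i₀ 1 ⬝ᵥ x) = 1 ∨ pi4 (Pi.single i₀ 1 ⬝ᵥ x) = 3) ∧
      ∀ m ∈ crossForms r i₀, pi4 (m ⬝ᵥ x) = 0 := by
  simp only [crossForms, mem_zero_four_eight_iff, map_sub, map_add, sub_eq_zero,
    add_eq_zero_iff_eq_neg, single_dotProduct, one_mul, List.forall_mem_map, List.mem_finRange,
    forall_const, sub_dotProduct, map_mul]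
  exact forall_eq_or_forall_eq_neg_iff (a := fun i => pi4 (r i)) (y := fun i => pi4 (x i))
    (eq_one_or_eq_three_of_odd (hr.map pi4))

end VaughanLee

open VaughanLee Matrix in
open scoped Classical in
theorem stmt_10_general (k : ℕ) (r : Fin k → ZMod 12)
    (hr : ∃ i, Odd (r i)) :
    InClo k (fun x =>
      if (∀ i, x i - r i ∈ ({0, 4, 8} : Set (ZMod 12))) ∨
         (∀ i, x i + r i ∈ ({0, 4, 8} : Set (ZMod 12)))
      then (4 : ZMod 12) else 0) := by
  obtain ⟨i₀, hodd⟩ := hr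
  have : NeZero k := ⟨i₀.pos.ne'⟩
  convert (isTerm_zero_ite_odd_and_forall (Pi.single i₀ 1) (crossForms r i₀)).inClo using 1
  funext x
  exact if_congr (forall_sub_mem_or_forall_add_mem_iff hodd x) rfl rfl

open scoped Classical in
theorem stmt_10 (k : ℕ) (hk : 1 ≤ k) (r : Fin k → ZMod 12)
    (hr : ∃ i, Odd (r i)) :
    InClo k (fun x =>
      if (∀ i, x i - r i ∈ ({0, 4, 8} : Set (ZMod 12))) ∨
         (∀ i, x i + r i ∈ ({0, 4, 8} : Set (ZMod 12)))
      then (4 : ZMod 12) else 0) :=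
  stmt_10_general k r hr
end
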